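/- arXiv:math/0609008 — 3 statements merged into one kernel-verified Lean document; each statement's English description precedes it below -/
import Mathlib

section
/- Let F: T → U be an exact functor of triangulated categories, C a subcategory of T, and M an object of T. Then level_U^{F(C)}(F(M)) ≤ level_T^C(M). Moreover, if there is a functor G: U → T with G∘F naturally isomorphic to the identity of T, then equality holds. -/
/-!
Statement 11: An exact functor F : T → U of triangulated categories does not
raise levels: level_U^{F(C)}(F(M)) ≤ level_T^C(M); if moreover there is a functor
G : U → T with G ∘ F ≅ id_T then equality holds.
-/

open CategoryTheory Limits Pretriangulated

universe v u

section Levels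

variable (T : Type u) [Category.{v} T] [HasZeroObject T] [Preadditive T]
  [HasShift T ℤ] [∀ n : ℤ, (CategoryTheory.shiftFunctor T n).Additive]
  [Pretriangulated T] [HasBinaryBiproducts T]

/-- The closure of a class of objects under suspensions, finite direct sums and
isomorphisms. -/
inductive AddClosure (C : Set T) : T → Prop
  | of {X : T} (h : X ∈ C) : AddClosure C X
  | shift {X : T} (n : ℤ) (h : AddClosure C X) : AddClosure C (X⟦n⟧)
  | biprod {X Y : T} (hX : AddClosure C X) (hY : AddClosure C Y) : AddClosure C (X ⊞ Y)
  | of_iso {X Y : T} (e : X ≅ Y) (h : AddClosure C X) : AddClosure C Y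

/-- Closure of a class of objects under retracts. -/
def retractClosure (S : Set T) : Set T :=
  {X | ∃ Y ∈ S, ∃ (i : X ⟶ Y) (r : Y ⟶ X), i ≫ r = 𝟙 X}

/-- `A ⋆ B`: objects `X` fitting in an exact triangle `Y → X → Z → ΣY` with
`Y ∈ A` and `Z ∈ B`. -/
def starOp (A B : Set T) : Set T :=
  {X | ∃ (Y Z : T) (f : Y ⟶ X) (g : X ⟶ Z) (h : Z ⟶ Y⟦(1 : ℤ)⟧),
    (Triangle.mk f g h ∈ (distTriang T)) ∧ Y ∈ A ∧ Z ∈ B}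

/-- The `n`-th thickening of `C` in `T`. -/
noncomputable def thickening (C : Set T) : ℕ → Set T
  | 0 => {X | IsZero X}
  | n + 1 => retractClosure T (starOp T (thickening C n) (retractClosure T (AddClosure T C)))

/-- The level of `X` with respect to `C`: the least `n` with `X ∈ thickening C n`. -/
noncomputable def level (C : Set T) (X : T) : ℕ∞ :=
  ⨅ (n : ℕ) (_ : X ∈ thickening T C n), (n : ℕ∞)

end Levels

universe v' u'

section Aux

variable {T : Type u} [Category.{v} T] [HasZeroObject T] [Preadditive T]
  [HasShift T ℤ] [∀ n : ℤ, (CategoryTheory.shiftFunctor T n).Additive]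
  [Pretriangulated T] [HasBinaryBiproducts T]
  {U : Type u'} [Category.{v'} U] [HasZeroObject U] [Preadditive U]
  [HasShift U ℤ] [∀ n : ℤ, (CategoryTheory.shiftFunctor U n).Additive]
  [Pretriangulated U] [HasBinaryBiproducts U]

lemma addClosure_map (F : T ⥤ U) [F.CommShift ℤ] [F.IsTriangulated]
    {C : Set T} {X : T} (h : AddClosure T C X) :
    AddClosure U (F.obj '' C) (F.obj X) := by
  induction h with
  | of h => exact .of ⟨_, h, rfl⟩
  | shift n h ih => exact .of_iso ((F.commShiftIso n).app _).symm (.shift n ih)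
  | biprod hX hY ihX ihY =>
    haveI : PreservesBinaryBiproducts F := preservesBinaryBiproducts_of_preservesBiproducts F
    exact .of_iso (F.mapBiprod _ _).symm (.biprod ihX ihY)
  | of_iso e h ih => exact .of_iso (F.mapIso e) ih

lemma thickening_map (F : T ⥤ U) [F.CommShift ℤ] [F.IsTriangulated]
    {C : Set T} : ∀ (n : ℕ) {X : T}, X ∈ thickening T C n →
      F.obj X ∈ thickening U (F.obj '' C) n
  | 0, X, h => F.map_isZero h
  | n+1, X, ⟨W, ⟨Y, Z, f, g, h, hdist, hY, Z', hZ', j, s, hjs⟩, i, r, hir⟩ =>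
      ⟨F.obj W, ⟨F.obj Y, F.obj Z, F.map f, F.map g,
        F.map h ≫ (F.commShiftIso (1 : ℤ)).hom.app Y, F.map_distinguished _ hdist,
        thickening_map F n hY,
        ⟨F.obj Z', addClosure_map F hZ', F.map j, F.map s, by
          rw [← F.map_comp, hjs, F.map_id]⟩⟩,
        F.map i, F.map r, by rw [← F.map_comp, hir, F.map_id]⟩

lemma addClosure_subset {C C' : Set T} (h : ∀ x ∈ C', ∃ y ∈ C, Nonempty (x ≅ y))
    {X : T} (hX : AddClosure T C' X) : AddClosure T C X := by
  induction hX with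
  | of hx => obtain ⟨y, hy, ⟨e⟩⟩ := h _ hx; exact .of_iso e.symm (.of hy)
  | shift n _ ih => exact .shift n ih
  | biprod _ _ ih1 ih2 => exact .biprod ih1 ih2
  | of_iso e _ ih => exact .of_iso e ih

lemma thickening_iso {C : Set T} : ∀ (n : ℕ) {X Y : T} (_ : X ≅ Y),
    X ∈ thickening T C n → Y ∈ thickening T C n
  | 0, _, _, e, h => h.of_iso e.symm
  | n+1, X, Y, e, ⟨W, hW, i, r, hir⟩ =>
      ⟨W, hW, e.inv ≫ i, r ≫ e.hom, by
        rw [Category.assoc, ← Category.assoc i, hir, Category.id_comp, e.inv_hom_id]⟩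

lemma thickening_subset {C C' : Set T} (h : ∀ x ∈ C', ∃ y ∈ C, Nonempty (x ≅ y)) :
    ∀ (n : ℕ) {X : T}, X ∈ thickening T C' n → X ∈ thickening T C n
  | 0, _, hX => hX
  | n+1, X, ⟨W, ⟨Y, Z, f, g, hh, hdist, hY, Z', hZ', j, s, hjs⟩, i, r, hir⟩ =>
      ⟨W, ⟨Y, Z, f, g, hh, hdist, thickening_subset h n hY,
        ⟨Z', addClosure_subset h hZ', j, s, hjs⟩⟩, i, r, hir⟩

lemma level_le_level {C : Set T} {D : Set U} {X : T} {Y : U}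
    (h : ∀ n, X ∈ thickening T C n → Y ∈ thickening U D n) :
    level U D Y ≤ level T C X :=
  le_iInf₂ fun n hn => iInf₂_le n (h n hn)

end Aux

theorem level_le_of_exact_functor
    (T : Type u) [Category.{v} T] [HasZeroObject T] [Preadditive T]
    [HasShift T ℤ] [∀ n : ℤ, (CategoryTheory.shiftFunctor T n).Additive]
    [Pretriangulated T] [HasBinaryBiproducts T]
    (U : Type u') [Category.{v'} U] [HasZeroObject U] [Preadditive U]
    [HasShift U ℤ] [∀ n : ℤ, (CategoryTheory.shiftFunctor U n).Additive]
    [Pretriangulated U] [HasBinaryBiproducts U]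
    (F : T ⥤ U) [F.CommShift ℤ] [F.IsTriangulated]
    (C : Set T) (M : T) :
    level U (F.obj '' C) (F.obj M) ≤ level T C M ∧
      (∀ (G : U ⥤ T) (_ : G.CommShift ℤ) (_ : G.IsTriangulated),
        (F ⋙ G ≅ Functor.id T) →
        level U (F.obj '' C) (F.obj M) = level T C M) := by
  constructor
  · exact level_le_level fun n hn => thickening_map F n hn
  · intro G hG1 hG2 e
    letI := hG1
    letI := hG2
    refine le_antisymm (level_le_level fun n hn => thickening_map F n hn) ?_
    refine level_le_level fun n hn => ?_
    have h1 := thickening_map G n hn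
    have h2 := thickening_iso n (e.app M) h1
    refine thickening_subset (C := C) (fun x hx => ?_) n h2
    obtain ⟨u, ⟨c, hc, rfl⟩, rfl⟩ := hx
    exact ⟨c, hc, ⟨e.app c⟩⟩
end

section
/- Let R be a ring and P a bounded complex of finitely generated projective R-modules. Then level_R^R(P) ≤ card{n ∈ ℤ : P_n ≠ 0}. -/
/-!
Statement 12: For a bounded complex P of finitely generated projective
R-modules, level_R^R(P) ≤ card {n : P_n ≠ 0} in the derived category D(R).
-/

open CategoryTheory Limits Pretriangulated

universe v u

set_option linter.unusedSectionVars false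
set_option maxHeartbeats 1000000
open ZeroObject

section Helpers

open ZeroObject

variable {T : Type u} [Category.{v} T] [HasZeroObject T] [Preadditive T]
  [HasShift T ℤ] [∀ n : ℤ, (CategoryTheory.shiftFunctor T n).Additive]
  [Pretriangulated T] [HasBinaryBiproducts T]

lemma mem_retract_of_mem {S : Set T} {X : T} (h : X ∈ S) : X ∈ retractClosure T S :=
  ⟨X, h, 𝟙 X, 𝟙 X, Category.comp_id _⟩

lemma retractClosure_iso {S : Set T} {X Y : T} (e : X ≅ Y) (h : Y ∈ retractClosure T S) :
    X ∈ retractClosure T S := by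
  obtain ⟨Z, hZ, i, r, hir⟩ := h
  exact ⟨Z, hZ, e.hom ≫ i, r ≫ e.inv, by
    rw [Category.assoc, ← Category.assoc i, hir, Category.id_comp, e.hom_inv_id]⟩

lemma retractClosure_shift {C : Set T} {X : T} (n : ℤ)
    (h : X ∈ retractClosure T (AddClosure T C)) :
    X⟦n⟧ ∈ retractClosure T (AddClosure T C) := by
  obtain ⟨Y, hY, i, r, hir⟩ := h
  exact ⟨Y⟦n⟧, .shift n hY, (shiftFunctor T n).map i, (shiftFunctor T n).map r, by
    rw [← Functor.map_comp, hir, CategoryTheory.Functor.map_id]⟩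

lemma zero_mem_thickening {C : Set T} (hC : C.Nonempty) (k : ℕ) {X : T} (hX : IsZero X) :
    X ∈ thickening T C k := by
  induction k with
  | zero => exact hX
  | succ k ih =>
    obtain ⟨c, hc⟩ := hC
    refine mem_retract_of_mem ⟨X, 0, 𝟙 X, 0, 0, contractible_distinguished X, ih,
      ⟨c, .of hc, 0, 0, (isZero_zero T).eq_of_src _ _⟩⟩

end Helpers



section Trunc

variable {R : Type u} [Ring R]

/-- The degree `i` term of the brutal truncation keeping degrees `> m`. -/
noncomputable def trX (P : CochainComplex (ModuleCat.{u} R) ℤ) (m i : ℤ) : ModuleCat.{u} R :=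
  if m < i then P.X i else ModuleCat.of R PUnit.{u+1}

lemma trX_eq_of_lt {P : CochainComplex (ModuleCat.{u} R) ℤ} {m i : ℤ} (h : m < i) :
    trX P m i = P.X i := if_pos h

lemma isZero_trX {P : CochainComplex (ModuleCat.{u} R) ℤ} {m i : ℤ} (h : ¬ m < i) :
    IsZero (trX P m i) := by
  rw [trX, if_neg h]
  exact ModuleCat.isZero_of_subsingleton _

/-- The brutal truncation of `P` keeping degrees `> m`. -/
noncomputable def trunc (P : CochainComplex (ModuleCat.{u} R) ℤ) (m : ℤ) :
    CochainComplex (ModuleCat.{u} R) ℤ where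
  X := trX P m
  d i j :=
    if hi : m < i then
      if hj : m < j then
        eqToHom (trX_eq_of_lt hi) ≫ P.d i j ≫ eqToHom (trX_eq_of_lt hj).symm
      else 0
    else 0
  shape i j h := by
    split_ifs with hi hj
    · rw [P.shape i j h, zero_comp, comp_zero]
    · rfl
    · rfl
  d_comp_d' i j k hij hjk := by
    simp only [ComplexShape.up_Rel] at hij hjk
    by_cases hi : m < i
    · have hj : m < j := by omega
      have hk : m < k := by omega
      rw [dif_pos hi, dif_pos hj, dif_pos hj, dif_pos hk]
      simp
    · rw [dif_neg hi, zero_comp]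

/-- The inclusion of the brutal truncation. -/
noncomputable def truncι (P : CochainComplex (ModuleCat.{u} R) ℤ) (m : ℤ) :
    trunc P m ⟶ P where
  f i := if hi : m < i then eqToHom (trX_eq_of_lt hi) else 0
  comm' i j hij := by
    simp only [ComplexShape.up_Rel] at hij
    dsimp [trunc]
    by_cases hi : m < i
    · have hj : m < j := by omega
      simp [hi, hj]
    · simp [hi]
      exact zero_comp

/-- The projection to the single complex in lowest degree. -/
noncomputable def truncπ (P : CochainComplex (ModuleCat.{u} R) ℤ) (m : ℤ)
    (hlow : ∀ i < m, IsZero (P.X i)) :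
    P ⟶ (HomologicalComplex.single (ModuleCat.{u} R) (ComplexShape.up ℤ) m).obj (P.X m) :=
  HomologicalComplex.mkHomToSingle (𝟙 _) (fun i hi => by
    simp only [ComplexShape.up_Rel] at hi
    rw [(hlow i (by omega)).eq_of_src (P.d i m) 0, zero_comp])

/-- The short exact sequence `0 ⟶ trunc P m ⟶ P ⟶ (P.X m)[m] ⟶ 0`. -/
noncomputable def truncSES (P : CochainComplex (ModuleCat.{u} R) ℤ) (m : ℤ)
    (hlow : ∀ i < m, IsZero (P.X i)) :
    ShortComplex (CochainComplex (ModuleCat.{u} R) ℤ) :=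
  ShortComplex.mk (truncι P m) (truncπ P m hlow) (by
    apply HomologicalComplex.hom_ext
    intro i
    by_cases him : i = m
    · subst him
      exact (isZero_trX (lt_irrefl i)).eq_of_src _ _
    · exact (HomologicalComplex.isZero_single_obj_X (ComplexShape.up ℤ) m (P.X m) i him).eq_of_tgt _ _)

lemma truncSES_shortExact (P : CochainComplex (ModuleCat.{u} R) ℤ) (m : ℤ)
    (hlow : ∀ i < m, IsZero (P.X i)) :
    (truncSES P m hlow).ShortExact := by
  rw [HomologicalComplex.shortExact_iff_degreewise_shortExact]
  intro i
  by_cases hi : m < i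
  · have him : i ≠ m := by omega
    refine ShortComplex.Splitting.shortExact
      { r := eqToHom (trX_eq_of_lt hi).symm
        s := 0
        f_r := ?_
        s_g := (HomologicalComplex.isZero_single_obj_X (ComplexShape.up ℤ) m (P.X m) i him).eq_of_src _ _
        id := ?_ }
    · dsimp [truncSES, truncι]
      simp [hi]
      exact (eqToHom_trans _ _).trans (eqToHom_refl _ _)
    · dsimp [truncSES, truncι, truncπ]
      simp [hi]
      erw [comp_zero, add_zero]
      exact (eqToHom_trans _ _).trans (eqToHom_refl _ _)
  · by_cases him : i = m
    · subst him
      refine ShortComplex.Splitting.shortExact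
        { r := 0
          s := (HomologicalComplex.singleObjXSelf (ComplexShape.up ℤ) i (P.X i)).hom
          f_r := (isZero_trX hi).eq_of_src _ _
          s_g := ?_
          id := ?_ }
      · dsimp [truncSES, truncπ]
        simp [HomologicalComplex.mkHomToSingle_f]
        exact Iso.hom_inv_id _
      · dsimp [truncSES, truncι, truncπ]
        simp [hi, HomologicalComplex.mkHomToSingle_f]
        erw [zero_comp, zero_add]
        exact Iso.inv_hom_id _
    · have hlt : i < m := by omega
      refine ShortComplex.Splitting.shortExact
        { r := 0
          s := 0
          f_r := (isZero_trX hi).eq_of_src _ _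
          s_g := (HomologicalComplex.isZero_single_obj_X (ComplexShape.up ℤ) m (P.X m) i him).eq_of_src _ _
          id := (hlow i hlt).eq_of_src _ _ }

end Trunc



section Fin

variable (R : Type u) [Ring R]

/-- `Fin (n+1) → R` is linearly equivalent to `R × (Fin n → R)`. -/
noncomputable def finSuccLinearEquiv (n : ℕ) :
    ((Fin (n + 1) → R)) ≃ₗ[R] (R × (Fin n → R)) :=
  LinearEquiv.ofLinear
    (LinearMap.prod (LinearMap.proj 0) (LinearMap.funLeft R R Fin.succ))
    (LinearMap.pi (fun i => Fin.cases (LinearMap.fst R R (Fin n → R))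
      (fun j => (LinearMap.proj j).comp (LinearMap.snd R R (Fin n → R))) i))
    (by
      apply LinearMap.prod_ext <;> ext x <;>
        simp [LinearMap.funLeft]
      )
    (by
      ext x i
      refine Fin.cases ?_ (fun j => ?_) i <;>
        simp [LinearMap.funLeft])

end Fin

section Singles

variable {R : Type u} [Ring R] [HasDerivedCategory (ModuleCat.{u} R)]


/-- The generating class: the single complex `R` in degree `0`. -/
noncomputable def Cset (R : Type u) [Ring R] [HasDerivedCategory (ModuleCat.{u} R)] :
    Set (DerivedCategory (ModuleCat.{u} R)) :=
  {((DerivedCategory.singleFunctor (ModuleCat.{u} R) 0).obj (ModuleCat.of R R))}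

lemma free_mem_addClosure (n : ℕ) :
    AddClosure (DerivedCategory (ModuleCat.{u} R)) (Cset R)
      ((DerivedCategory.singleFunctor (ModuleCat.{u} R) 0).obj
        (ModuleCat.of R (Fin (n + 1) → R))) := by
  induction n with
  | zero =>
    exact AddClosure.of_iso
      ((DerivedCategory.singleFunctor (ModuleCat.{u} R) 0).mapIso
        (LinearEquiv.funUnique (Fin 1) R R).toModuleIso).symm (.of rfl)
  | succ n ih =>
    have hbi : AddClosure (DerivedCategory (ModuleCat.{u} R)) (Cset R)
        ((DerivedCategory.singleFunctor (ModuleCat.{u} R) 0).obj (ModuleCat.of R R) ⊞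
          (DerivedCategory.singleFunctor (ModuleCat.{u} R) 0).obj
            (ModuleCat.of R (Fin (n + 1) → R))) := .biprod (.of rfl) ih
    haveI := preservesBinaryBiproducts_of_preservesBiproducts
      (DerivedCategory.singleFunctor (ModuleCat.{u} R) 0)
    refine AddClosure.of_iso (Iso.symm ?_) hbi
    refine ((DerivedCategory.singleFunctor (ModuleCat.{u} R) 0).mapIso
      ((finSuccLinearEquiv R (n+1)).toModuleIso ≪≫
        (ModuleCat.biprodIsoProd (ModuleCat.of R R) (ModuleCat.of R (Fin (n + 1) → R))).symm)) ≪≫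
      Functor.mapBiprod _ _ _

end Singles

section Main

variable {R : Type u} [Ring R] [HasDerivedCategory (ModuleCat.{u} R)]

lemma singleZero_mem_retract (M : ModuleCat.{u} R) [Module.Finite R M]
    [Module.Projective R M] :
    (DerivedCategory.singleFunctor (ModuleCat.{u} R) 0).obj M ∈
      retractClosure (DerivedCategory (ModuleCat.{u} R))
        (AddClosure (DerivedCategory (ModuleCat.{u} R)) (Cset R)) := by
  obtain ⟨n, f, hf⟩ := Module.Finite.exists_fin' R M
  let f' : (Fin (n + 1) → R) →ₗ[R] M := f ∘ₗ LinearMap.funLeft R R Fin.castSucc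
  have hsurj : Function.Surjective
      (LinearMap.funLeft R R (Fin.castSucc : Fin n → Fin (n + 1))) := by
    intro v
    exact ⟨Fin.snoc v 0, funext fun i => by simp [LinearMap.funLeft_apply]⟩
  have hf' : Function.Surjective f' := hf.comp hsurj
  obtain ⟨g, hg⟩ := Module.projective_lifting_property f' LinearMap.id hf'
  refine ⟨_, free_mem_addClosure n,
    (DerivedCategory.singleFunctor (ModuleCat.{u} R) 0).map
      (show M ⟶ ModuleCat.of R (Fin (n + 1) → R) from ModuleCat.ofHom g),
    (DerivedCategory.singleFunctor (ModuleCat.{u} R) 0).map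
      (show ModuleCat.of R (Fin (n + 1) → R) ⟶ M from ModuleCat.ofHom f'), ?_⟩
  rw [← Functor.map_comp, show (show M ⟶ ModuleCat.of R (Fin (n + 1) → R) from ModuleCat.ofHom g) ≫
      (show ModuleCat.of R (Fin (n + 1) → R) ⟶ M from ModuleCat.ofHom f') = 𝟙 M from
        ModuleCat.hom_ext hg,
    CategoryTheory.Functor.map_id]

lemma single_mem_retract (m : ℤ) (M : ModuleCat.{u} R) [Module.Finite R M]
    [Module.Projective R M] :
    DerivedCategory.Q.obj
        ((HomologicalComplex.single (ModuleCat.{u} R) (ComplexShape.up ℤ) m).obj M) ∈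
      retractClosure (DerivedCategory (ModuleCat.{u} R))
        (AddClosure (DerivedCategory (ModuleCat.{u} R)) (Cset R)) := by
  refine retractClosure_iso ?_ (retractClosure_shift (-m) (singleZero_mem_retract M))
  refine (((SingleFunctors.evaluation _ _ m).mapIso
    (DerivedCategory.singleFunctorsPostcompQIso (ModuleCat.{u} R))).app M).symm ≪≫ ?_
  refine ((shiftFunctorCompIsoId (DerivedCategory (ModuleCat.{u} R)) m (-m)
    (by omega)).app _).symm ≪≫ ?_
  exact (shiftFunctor (DerivedCategory (ModuleCat.{u} R)) (-m)).mapIso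
    (((DerivedCategory.singleFunctors (ModuleCat.{u} R)).shiftIso m 0 m (add_zero m)).app M)

lemma isZero_Q_obj {P : CochainComplex (ModuleCat.{u} R) ℤ}
    (h : ∀ i, IsZero (P.X i)) : IsZero (DerivedCategory.Q.obj P) := by
  have hz : IsZero P := by
    rw [IsZero.iff_id_eq_zero]
    apply HomologicalComplex.hom_ext
    intro i
    exact (h i).eq_of_src _ _
  rw [IsZero.iff_id_eq_zero, ← CategoryTheory.Functor.map_id,
    show (𝟙 P) = 0 from hz.eq_of_src _ _, Functor.map_zero]

lemma main_induction (k : ℕ) :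
    ∀ (S : Finset ℤ) (_ : S.card ≤ k) (P : CochainComplex (ModuleCat.{u} R) ℤ)
      (_ : ∀ i, Module.Finite R (P.X i)) (_ : ∀ i, Module.Projective R (P.X i))
      (_ : ∀ i, ¬ IsZero (P.X i) → i ∈ S),
      DerivedCategory.Q.obj P ∈
        thickening (DerivedCategory (ModuleCat.{u} R)) (Cset R) k := by
  induction k with
  | zero =>
    intro S hS P hfg hproj hsupp
    refine isZero_Q_obj (fun i => ?_)
    by_contra h
    have := hsupp i h
    rw [Finset.card_eq_zero.mp (Nat.le_zero.mp hS)] at this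
    exact absurd this (Finset.notMem_empty i)
  | succ k ih =>
    intro S hS P hfg hproj hsupp
    by_cases hne : S.Nonempty
    · set m := S.min' hne with hm
      have hlow : ∀ i < m, IsZero (P.X i) := fun i hilt => by
        by_contra h
        exact absurd (S.min'_le i (hsupp i h)) (by omega)
      have hSE := truncSES_shortExact P m hlow
      refine mem_retract_of_mem
        ⟨DerivedCategory.Q.obj (trunc P m), _, DerivedCategory.Q.map (truncι P m),
          DerivedCategory.Q.map (truncπ P m hlow), DerivedCategory.triangleOfSESδ hSE,
          DerivedCategory.triangleOfSES_distinguished hSE, ?_, ?_⟩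
      · refine ih (S.erase m) ?_ (trunc P m) ?_ ?_ ?_
        · rw [Finset.card_erase_of_mem (S.min'_mem hne)]
          omega
        · intro i
          show Module.Finite R (trX P m i)
          by_cases hi : m < i
          · rw [trX_eq_of_lt hi]; exact hfg i
          · rw [trX, if_neg hi]; infer_instance
        · intro i
          show Module.Projective R (trX P m i)
          by_cases hi : m < i
          · rw [trX_eq_of_lt hi]; exact hproj i
          · rw [trX, if_neg hi]; infer_instance
        · intro i h
          by_cases hi : m < i
          · refine Finset.mem_erase.mpr ⟨by omega, hsupp i ?_⟩
            intro hz
            refine h ?_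
            show IsZero (trX P m i)
            rw [trX_eq_of_lt hi]
            exact hz
          · exact absurd (isZero_trX hi) h
      · haveI := hfg m
        haveI := hproj m
        exact single_mem_retract m (P.X m)
    · rw [Finset.not_nonempty_iff_eq_empty] at hne
      refine zero_mem_thickening (show (Cset R).Nonempty from ⟨_, rfl⟩) _ (isZero_Q_obj (fun i => ?_))
      by_contra h
      have := hsupp i h
      rw [hne] at this
      exact absurd this (Finset.notMem_empty i)

end Main


theorem level_ring_le_card_nonzero
    (R : Type u) [Ring R] [HasDerivedCategory (ModuleCat.{u} R)]
    (P : CochainComplex (ModuleCat.{u} R) ℤ)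
    (a b : ℤ) (hbound : ∀ i, i < a ∨ b < i → Limits.IsZero (P.X i))
    (hfg : ∀ i, Module.Finite R (P.X i))
    (hproj : ∀ i, Module.Projective R (P.X i)) :
    level (DerivedCategory (ModuleCat.{u} R))
        {((DerivedCategory.singleFunctor (ModuleCat.{u} R) 0).obj (ModuleCat.of R R))}
        (DerivedCategory.Q.obj P) ≤
      ({n : ℤ | ¬ Limits.IsZero (P.X n)}.ncard : ℕ∞) := by
  classical
  have hfin : {n : ℤ | ¬ Limits.IsZero (P.X n)}.Finite := by
    refine (Set.finite_Icc a b).subset (fun i hi => ?_)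
    simp only [Set.mem_setOf_eq] at hi
    rw [Set.mem_Icc]
    constructor
    · by_contra h1
      exact hi (hbound i (Or.inl (by omega)))
    · by_contra h1
      exact hi (hbound i (Or.inr (by omega)))
  have hmem := main_induction hfin.toFinset.card hfin.toFinset le_rfl P hfg hproj
    (fun i hi => hfin.mem_toFinset.mpr hi)
  have hcard : {n : ℤ | ¬ Limits.IsZero (P.X n)}.ncard = hfin.toFinset.card :=
    Set.ncard_eq_toFinset_card _ hfin
  rw [hcard]
  exact iInf₂_le hfin.toFinset.card hmem
end

section
/- Let Q be a local ring, I' an ideal with R = Q/I', and suppose I' = (x) + I'' where x = x_1,...,x_r is a (Q/I'')-regular sequence contained in I'. Set Q̄ = Q/(x) and Ī = I'/(x). Then the sequence of R-modules 0 → R^r → I'/I'^2 → Ī/Ī^2 → 0, where the first map sends the i-th standard basis vector to x_i + I'^2, is split exact. In particular I'/I'^2 ≅ R^r ⊕ Ī/Ī^2. -/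
/-!
Statement 16: Let `Q` be a (local) ring, `I' = (x₁,…,x_r) + I''` an ideal such that
`x = x₁,…,x_r` is a `(Q/I'')`-regular sequence contained in `I'`, and set
`R = Q/I'`, `Q̄ = Q/(x)`, `Ī = I'/(x)`.  Then the sequence of `R`-modules
`0 → R^r → I'/I'² → Ī/Ī² → 0`, where the first map sends the `i`-th basis vector
to `x_i + I'²` and the second is induced by `Q → Q̄`, is split exact.  In
particular `I'/I'² ≅ R^r ⊕ Ī/Ī²`.

All maps are written `Q`-linearly; since all three modules are killed by `I'`,
`Q`-linearity is equivalent to linearity over `R = Q/I'`.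
-/

universe u

section

variable (Q : Type u) [CommRing Q] (I'' : Ideal Q) (r : ℕ) (x : Fin r → Q)

/-- The ideal generated by the sequence `x`. -/
noncomputable def seqIdeal : Ideal Q := Ideal.span (Set.range x)

variable (I' : Ideal Q)

/-- The image ideal `Ī = I'/(x)` in `Q̄ = Q/(x)`. -/
noncomputable def imageIdeal : Ideal (Q ⧸ seqIdeal Q r x) :=
  I'.map (Ideal.Quotient.mk (seqIdeal Q r x))

/-- The map `R^r → I'/I'²` sending the `i`-th standard basis vector to the class
of `x_i`. -/
noncomputable def basisToConormal (hx : ∀ i, x i ∈ I') :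
    (Fin r → Q ⧸ I') →ₗ[Q] I'.Cotangent where
  toFun v := ∑ i, v i • I'.toCotangent ⟨x i, hx i⟩
  map_add' v w := by simp [add_smul, Finset.sum_add_distrib]
  map_smul' a v := by simp [Finset.smul_sum, smul_assoc]

/-- The natural surjection `I'/I'² → Ī/Ī²` induced by `Q → Q̄ = Q/(x)`. -/
noncomputable def conormalToConormal :
    I'.Cotangent →ₗ[Q] (imageIdeal Q r x I').Cotangent :=
  Ideal.mapCotangent I' (imageIdeal Q r x I')
    (Ideal.Quotient.mkₐ Q (seqIdeal Q r x)) (Ideal.le_comap_map)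

end

section AuxConormal16

namespace Conormal16

open Ideal

variable {Q : Type u} [CommRing Q] {r : ℕ}

/-- Extension of `x` by zero to `ℕ`. -/
noncomputable def y (x : Fin r → Q) : ℕ → Q := fun i => if h : i < r then x ⟨i, h⟩ else 0

/-- The prefix ideals `I'' + (x₀, …, x_{n-1})`. -/
noncomputable abbrev K (I'' : Ideal Q) (x : Fin r → Q) (n : ℕ) : Ideal Q :=
  I'' ⊔ Ideal.span (y x '' Set.Iio n)

lemma K_mono {I'' : Ideal Q} {x : Fin r → Q} {n m : ℕ} (h : n ≤ m) : K I'' x n ≤ K I'' x m :=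
  sup_le_sup_left (Ideal.span_mono (Set.image_mono (Set.Iio_subset_Iio h))) _

lemma y_mem_span {x : Fin r → Q} {n i : ℕ} (h : i < n) :
    y x i ∈ Ideal.span (y x '' Set.Iio n) :=
  Ideal.subset_span ⟨i, h, rfl⟩

lemma span_Iio_eq (x : Fin r → Q) (n : ℕ) :
    Ideal.span (y x '' Set.Iio n) = Ideal.span (Set.range fun i : Fin n => y x (i : ℕ)) := by
  congr 1
  ext q
  constructor
  · rintro ⟨i, hi, rfl⟩; exact ⟨⟨i, hi⟩, rfl⟩
  · rintro ⟨i, rfl⟩; exact ⟨(i : ℕ), i.isLt, rfl⟩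

lemma mk_mk_eq_zero_iff (I'' J : Ideal Q) (q : Q) :
    (Submodule.Quotient.mk (Ideal.Quotient.mk I'' q) :
      (Q ⧸ I'') ⧸ (J • ⊤ : Submodule Q (Q ⧸ I''))) = 0 ↔ q ∈ I'' ⊔ J := by
  rw [Submodule.Quotient.mk_eq_zero]
  have hN : (J • ⊤ : Submodule Q (Q ⧸ I'')) = Submodule.map (Submodule.mkQ I'') J := by
    rw [← (Submodule.range_mkQ I''), ← Submodule.map_top, ← Submodule.map_smul'',
      smul_eq_mul, Ideal.mul_top]
  rw [hN]
  constructor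
  · rintro ⟨b, hb, hbq⟩
    have : q - b ∈ I'' := by
      rw [← Ideal.Quotient.eq]
      exact (hbq.symm : _)
    have : q = (q - b) + b := by ring
    rw [this]
    exact Submodule.add_mem _ (Ideal.mem_sup_left ‹q - b ∈ I''›) (Ideal.mem_sup_right hb)
  · intro hq
    obtain ⟨c, hc, b, hb, hcb⟩ := Submodule.mem_sup.mp hq
    refine ⟨b, hb, ?_⟩
    show Ideal.Quotient.mk I'' b = Ideal.Quotient.mk I'' q
    rw [Ideal.Quotient.eq]
    have : b - q = -c := by rw [← hcb]; ring
    rw [this]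
    exact Submodule.neg_mem _ hc

lemma reg {I'' : Ideal Q} {x : Fin r → Q}
    (hreg : RingTheory.Sequence.IsRegular (Q ⧸ I'') (List.ofFn x))
    {n : ℕ} (hn : n < r) {a : Q} (ha : y x n * a ∈ K I'' x n) : a ∈ K I'' x n := by
  have hlen : n < (List.ofFn x).length := by simpa using hn
  have hw := hreg.toIsWeaklyRegular.regular_mod_prev n hlen
  have hJ : Ideal.ofList ((List.ofFn x).take n) = Ideal.span (y x '' Set.Iio n) := by
    have hset : {a | a ∈ (List.ofFn x).take n} = y x '' Set.Iio n := by
      ext q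
      simp only [Set.mem_setOf_eq, List.mem_take_iff_getElem, List.getElem_ofFn,
        List.length_ofFn, Set.mem_image, Set.mem_Iio]
      constructor
      · rintro ⟨i, hi, rfl⟩
        have h1 : i < n := lt_of_lt_of_le hi (min_le_left _ _)
        have h2 : i < r := lt_of_lt_of_le hi (min_le_right _ _)
        exact ⟨i, h1, by simp [y, h2]⟩
      · rintro ⟨i, hi, rfl⟩
        have h2 : i < r := lt_trans hi hn
        refine ⟨i, lt_min hi (by simpa using h2), by simp [y, h2]⟩
    show Ideal.span _ = _
    rw [hset]
  have hx_n : (List.ofFn x)[n]'hlen = y x n := by simp [y, hn]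
  rw [hJ, hx_n] at hw
  have h0 : (y x n) • (Submodule.Quotient.mk (Ideal.Quotient.mk I'' a) :
      (Q ⧸ I'') ⧸ (Ideal.span (y x '' Set.Iio n) • ⊤ : Submodule Q (Q ⧸ I''))) = 0 := by
    have e : (y x n) • (Submodule.Quotient.mk (Ideal.Quotient.mk I'' a) :
        (Q ⧸ I'') ⧸ (Ideal.span (y x '' Set.Iio n) • ⊤ : Submodule Q (Q ⧸ I''))) =
        Submodule.Quotient.mk (Ideal.Quotient.mk I'' (y x n * a)) := rfl
    rw [e, mk_mk_eq_zero_iff]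
    exact ha
  have := hw (by rw [h0, smul_zero] :
    (y x n) • (Submodule.Quotient.mk (Ideal.Quotient.mk I'' a) :
      (Q ⧸ I'') ⧸ (Ideal.span (y x '' Set.Iio n) • ⊤ : Submodule Q (Q ⧸ I''))) = (y x n) • 0)
  exact (mk_mk_eq_zero_iff I'' _ a).mp this

lemma keyRel {I'' : Ideal Q} {x : Fin r → Q}
    (hreg : RingTheory.Sequence.IsRegular (Q ⧸ I'') (List.ofFn x)) :
    ∀ (n : ℕ) (a : ℕ → Q), (∑ i ∈ Finset.range n, a i * y x i) ∈ I'' →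
      ∀ i, i < n → i < r → a i ∈ K I'' x n := by
  intro n
  induction n with
  | zero => intro a _ i hi; omega
  | succ n ih =>
    intro a h i hi hir
    rw [Finset.sum_range_succ] at h
    by_cases hn : n < r
    · have hsum : ∑ j ∈ Finset.range n, a j * y x j ∈ Ideal.span (y x '' Set.Iio n) :=
        Submodule.sum_mem _ fun j hj =>
          Ideal.mul_mem_left _ _ (y_mem_span (Finset.mem_range.mp hj))
      have h1 : y x n * a n ∈ K I'' x n := by
        rw [mul_comm]
        have e : a n * y x n =
            (∑ j ∈ Finset.range n, a j * y x j + a n * y x n) -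
              ∑ j ∈ Finset.range n, a j * y x j := by ring
        rw [e]
        exact Submodule.sub_mem _ (Ideal.mem_sup_left h) (Ideal.mem_sup_right hsum)
      have h2 : a n ∈ K I'' x n := reg hreg hn h1
      obtain ⟨b, hb, s, hs, hbs⟩ := Submodule.mem_sup.mp h2
      rw [span_Iio_eq] at hs
      obtain ⟨c, hc⟩ := (Submodule.mem_span_range_iff_exists_fun Q).mp hs
      set c' : ℕ → Q := fun j => if h : j < n then c ⟨j, h⟩ else 0 with hc'def
      have hc' : ∑ j ∈ Finset.range n, c' j * y x j = s := by
        rw [← Fin.sum_univ_eq_sum_range (fun j => c' j * y x j) n, ← hc]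
        exact Finset.sum_congr rfl fun j _ => by simp [hc'def, j.isLt]
      have ha' : ∑ j ∈ Finset.range n, (a j + c' j * y x n) * y x j ∈ I'' := by
        have expand : ∑ j ∈ Finset.range n, (a j + c' j * y x n) * y x j
            = (∑ j ∈ Finset.range n, a j * y x j + a n * y x n) - b * y x n := by
          rw [Finset.sum_congr rfl
            (fun j _ => (by ring : (a j + c' j * y x n) * y x j
              = a j * y x j + (c' j * y x j) * y x n)),
            Finset.sum_add_distrib, ← Finset.sum_mul, hc']
          have : a n = b + s := hbs.symm
          rw [this]; ring
        rw [expand]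
        exact Submodule.sub_mem _ h (Ideal.mul_mem_right _ _ hb)
      have IH := ih _ ha'
      rcases Nat.lt_succ_iff_lt_or_eq.mp hi with hi' | heq
      · have h3 := IH i hi' hir
        have e : a i = (a i + c' i * y x n) - c' i * y x n := by ring
        rw [e]
        refine Submodule.sub_mem _ (K_mono (Nat.le_succ n) h3) ?_
        exact Ideal.mem_sup_right (Ideal.mul_mem_left _ _ (y_mem_span (Nat.lt_succ_self n)))
      · rw [heq]; exact K_mono (Nat.le_succ n) h2
    · have hy0 : y x n = 0 := dif_neg hn
      rw [hy0, mul_zero, add_zero] at h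
      have hi' : i < n := by omega
      exact K_mono (Nat.le_succ n) (ih a h i hi' hir)

end Conormal16

end AuxConormal16

section AuxConormal16b

namespace Conormal16

open Ideal

variable {Q : Type u} [CommRing Q] {r : ℕ}

lemma keyFin {I'' : Ideal Q} {x : Fin r → Q} {I' : Ideal Q}
    (hreg : RingTheory.Sequence.IsRegular (Q ⧸ I'') (List.ofFn x))
    (hI' : I' = seqIdeal Q r x ⊔ I'')
    {a : Fin r → Q} (h : (∑ i, a i * x i) ∈ I'') (i : Fin r) : a i ∈ I' := by
  set a' : ℕ → Q := fun j => if hj : j < r then a ⟨j, hj⟩ else 0 with ha'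
  have hsum : ∑ j ∈ Finset.range r, a' j * y x j = ∑ i, a i * x i := by
    rw [← Fin.sum_univ_eq_sum_range (fun j => a' j * y x j) r]
    exact Finset.sum_congr rfl fun j _ => by simp [ha', y, j.isLt]
  have h2 := keyRel hreg r a' (by rw [hsum]; exact h) i i.isLt i.isLt
  have e : a' (i : ℕ) = a i := by simp [ha', i.isLt]
  rw [e] at h2
  have hset : y x '' Set.Iio r = Set.range x := by
    ext q
    constructor
    · rintro ⟨j, hj, rfl⟩
      exact ⟨⟨j, hj⟩, (dif_pos (Set.mem_Iio.mp hj) : y x j = _).symm⟩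
    · rintro ⟨j, rfl⟩; exact ⟨(j : ℕ), j.isLt, by simp [y]⟩
  have hKr : K I'' x r ≤ I' := by
    rw [hI']
    apply sup_le
    · exact le_sup_right
    · rw [show Ideal.span (y x '' Set.Iio r) = seqIdeal Q r x by rw [hset]; rfl]
      exact le_sup_left
  exact hKr h2

lemma exists_coef {I'' : Ideal Q} {x : Fin r → Q} {I' : Ideal Q}
    (hI' : I' = seqIdeal Q r x ⊔ I'') {v : Q} (hv : v ∈ I') :
    ∃ c : Fin r → Q, v - ∑ i, c i * x i ∈ I'' := by
  rw [hI'] at hv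
  obtain ⟨s, hs, b, hb, hsb⟩ := Submodule.mem_sup.mp hv
  have hs' : s ∈ Ideal.span (Set.range x) := hs
  obtain ⟨c, hc⟩ := (Submodule.mem_span_range_iff_exists_fun Q).mp hs'
  refine ⟨c, ?_⟩
  have e : v - ∑ i, c i * x i = b := by
    rw [← hsb, ← hc]
    simp [smul_eq_mul]
  rw [e]; exact hb

end Conormal16

end AuxConormal16b


theorem conormal_sequence_split_exact
    (Q : Type u) [CommRing Q] (I'' : Ideal Q) (r : ℕ) (x : Fin r → Q)
    (I' : Ideal Q) (hI' : I' = seqIdeal Q r x ⊔ I'')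
    (hx : ∀ i, x i ∈ I')
    (hreg : RingTheory.Sequence.IsRegular (Q ⧸ I'') (List.ofFn x)) :
    Function.Injective (basisToConormal Q r x I' hx) ∧
    Function.Exact (basisToConormal Q r x I' hx) (conormalToConormal Q r x I') ∧
    Function.Surjective (conormalToConormal Q r x I') ∧
    (∃ g : I'.Cotangent →ₗ[Q] (Fin r → Q ⧸ I'),
      g.comp (basisToConormal Q r x I' hx) = LinearMap.id) ∧
    Nonempty (I'.Cotangent ≃ₗ[Q]
      ((Fin r → Q ⧸ I') × (imageIdeal Q r x I').Cotangent)) := by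
  classical
  have hxsum : ∀ w : Fin r → Q, (∑ i, w i * x i) ∈ I' :=
    fun w => Submodule.sum_mem _ fun i _ => Ideal.mul_mem_left _ _ (hx i)
  let coef : I' → (Fin r → Q) := fun v => (Conormal16.exists_coef hI' v.2).choose
  have coef_spec : ∀ v : I', (v : Q) - ∑ i, coef v i * x i ∈ I'' :=
    fun v => (Conormal16.exists_coef hI' v.2).choose_spec
  have mkeq : ∀ (v : Q), ∀ (c d : Fin r → Q), (v - ∑ i, c i * x i ∈ I'') →
      (v - ∑ i, d i * x i ∈ I'') → ∀ i,
      Ideal.Quotient.mk I' (c i) = Ideal.Quotient.mk I' (d i) := by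
    intro v c d hcv hdv i
    have e : ∑ j, (c j - d j) * x j =
        (v - ∑ j, d j * x j) - (v - ∑ j, c j * x j) := by
      rw [Finset.sum_congr rfl (fun j _ => sub_mul (c j) (d j) (x j)),
        Finset.sum_sub_distrib]
      ring
    have hm : ∑ j, (c j - d j) * x j ∈ I'' := by
      rw [e]; exact Submodule.sub_mem _ hdv hcv
    have h3 := Conormal16.keyFin hreg hI' hm i
    rw [Ideal.Quotient.eq]
    exact h3
  let g0 : I' →ₗ[Q] (Fin r → Q ⧸ I') :=
  { toFun := fun v i => Ideal.Quotient.mk I' (coef v i)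
    map_add' := by
      intro v w
      funext i
      have h2 : ((v + w : I') : Q) - ∑ j, (coef v j + coef w j) * x j ∈ I'' := by
        have e : ((v + w : I') : Q) - ∑ j, (coef v j + coef w j) * x j
            = ((v : Q) - ∑ j, coef v j * x j) + ((w : Q) - ∑ j, coef w j * x j) := by
          rw [Finset.sum_congr rfl (fun j _ => add_mul (coef v j) (coef w j) (x j)),
            Finset.sum_add_distrib]
          push_cast
          ring
        rw [e]
        exact Submodule.add_mem _ (coef_spec v) (coef_spec w)
      have h3 := mkeq _ _ _ (coef_spec (v + w)) h2 i
      show Ideal.Quotient.mk I' (coef (v + w) i)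
          = Ideal.Quotient.mk I' (coef v i) + Ideal.Quotient.mk I' (coef w i)
      rw [h3, map_add]
    map_smul' := by
      intro q v
      funext i
      have h2 : ((q • v : I') : Q) - ∑ j, (q * coef v j) * x j ∈ I'' := by
        have e : ((q • v : I') : Q) - ∑ j, (q * coef v j) * x j
            = q * ((v : Q) - ∑ j, coef v j * x j) := by
          rw [Finset.sum_congr rfl (fun j _ => mul_assoc q (coef v j) (x j)),
            ← Finset.mul_sum, mul_sub]
          push_cast
          rw [smul_eq_mul]
        rw [e]
        exact Ideal.mul_mem_left _ _ (coef_spec v)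
      have h3 := mkeq _ _ _ (coef_spec (q • v)) h2 i
      show Ideal.Quotient.mk I' (coef (q • v) i) = q • Ideal.Quotient.mk I' (coef v i)
      rw [h3, Algebra.smul_def, Ideal.Quotient.algebraMap_eq, ← map_mul] }
  have hker : (I' • ⊤ : Submodule Q I') ≤ LinearMap.ker g0 := by
    refine Submodule.smul_le.mpr ?_
    intro q hq m _
    rw [LinearMap.mem_ker]
    obtain ⟨cq, hcq⟩ := Conormal16.exists_coef hI' hq
    have h2 : ((q • m : I') : Q) - ∑ j, (cq j * (m : Q)) * x j ∈ I'' := by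
      have e : ((q • m : I') : Q) - ∑ j, (cq j * (m : Q)) * x j
          = (q - ∑ j, cq j * x j) * (m : Q) := by
        rw [Finset.sum_congr rfl (fun j _ => mul_right_comm (cq j) ((m : I') : Q) (x j)),
          ← Finset.sum_mul, sub_mul]
        push_cast
        rw [smul_eq_mul]
      rw [e]
      exact Ideal.mul_mem_right _ _ hcq
    have h3 := mkeq _ _ _ (coef_spec (q • m)) h2
    funext i
    show Ideal.Quotient.mk I' (coef (q • m) i) = 0
    rw [h3 i, Ideal.Quotient.eq_zero_iff_mem]
    exact Ideal.mul_mem_left _ _ m.2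
  let g : I'.Cotangent →ₗ[Q] (Fin r → Q ⧸ I') := Submodule.liftQ _ g0 hker
  have gtoCot : ∀ v : I', g (I'.toCotangent v) = g0 v := fun v => rfl
  have fmk : ∀ w : Fin r → Q,
      basisToConormal Q r x I' hx (fun i => Ideal.Quotient.mk I' (w i))
        = I'.toCotangent ⟨∑ i, w i * x i, hxsum w⟩ := by
    intro w
    show (∑ i, (Ideal.Quotient.mk I' (w i)) • I'.toCotangent ⟨x i, hx i⟩) = _
    have e1 : ∀ i : Fin r, (Ideal.Quotient.mk I' (w i)) • I'.toCotangent ⟨x i, hx i⟩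
        = I'.toCotangent (w i • (⟨x i, hx i⟩ : I')) := by
      intro i
      rw [map_smul]
      rfl
    rw [Finset.sum_congr rfl (fun i _ => e1 i), ← map_sum]
    congr 1
    apply Subtype.ext
    push_cast
    simp [smul_eq_mul]
  have hgf1 : ∀ w : Fin r → Q,
      g (basisToConormal Q r x I' hx (fun i => Ideal.Quotient.mk I' (w i)))
        = fun i => Ideal.Quotient.mk I' (w i) := by
    intro w
    rw [fmk w, gtoCot]
    funext i
    show Ideal.Quotient.mk I' (coef ⟨∑ i, w i * x i, hxsum w⟩ i)
        = Ideal.Quotient.mk I' (w i)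
    exact mkeq _ _ _ (coef_spec _) (by simpa using I''.zero_mem) i
  have hsplit : g.comp (basisToConormal Q r x I' hx) = LinearMap.id := by
    apply LinearMap.ext
    intro v
    choose w hw using fun i => Ideal.Quotient.mk_surjective (v i)
    have hv : v = fun i => Ideal.Quotient.mk I' (w i) := funext fun i => (hw i).symm
    rw [LinearMap.comp_apply, hv, hgf1 w, LinearMap.id_apply]
  have hinj : Function.Injective (basisToConormal Q r x I' hx) := by
    intro a b hab
    have ha := LinearMap.congr_fun hsplit a
    have hb := LinearMap.congr_fun hsplit b
    rw [LinearMap.comp_apply, LinearMap.id_apply] at ha hb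
    rw [← ha, ← hb, hab]
  have hexact : Function.Exact (basisToConormal Q r x I' hx)
      (conormalToConormal Q r x I') := by
    intro m
    obtain ⟨⟨a, ha⟩, rfl⟩ := I'.toCotangent_surjective m
    have hmap : conormalToConormal Q r x I' (I'.toCotangent ⟨a, ha⟩)
        = (imageIdeal Q r x I').toCotangent
            ⟨Ideal.Quotient.mk (seqIdeal Q r x) a, Ideal.mem_map_of_mem _ ha⟩ := rfl
    constructor
    · intro h0
      rw [hmap, Ideal.toCotangent_eq_zero] at h0
      have h1 : (imageIdeal Q r x I') ^ 2
          = Ideal.map (Ideal.Quotient.mk (seqIdeal Q r x)) (I' ^ 2) := by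
        rw [Ideal.map_pow]; rfl
      rw [h1, Ideal.mem_map_iff_of_surjective _ Ideal.Quotient.mk_surjective] at h0
      obtain ⟨b, hb2, hba⟩ := h0
      have hab : a - b ∈ seqIdeal Q r x := by
        have h4 := Ideal.Quotient.eq.mp hba
        simpa using Submodule.neg_mem _ h4
      have hs : a - b ∈ Ideal.span (Set.range x) := hab
      obtain ⟨c, hc⟩ := (Submodule.mem_span_range_iff_exists_fun Q).mp hs
      refine ⟨fun i => Ideal.Quotient.mk I' (c i), ?_⟩
      rw [fmk c, Ideal.toCotangent_eq]
      show (∑ i, c i * x i) - a ∈ I' ^ 2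
      have hc' : ∑ i, c i * x i = a - b := by rw [← hc]; simp [smul_eq_mul]
      rw [hc', show a - b - a = -b by ring]
      exact Submodule.neg_mem _ hb2
    · rintro ⟨v, hv⟩
      choose w hw using fun i => Ideal.Quotient.mk_surjective (v i)
      have hvw : v = fun i => Ideal.Quotient.mk I' (w i) := funext fun i => (hw i).symm
      rw [← hv, hvw, fmk w]
      have hmem : (∑ i, w i * x i) ∈ seqIdeal Q r x :=
        Submodule.sum_mem _ fun i _ =>
          Ideal.mul_mem_left _ _ (Ideal.subset_span ⟨i, rfl⟩)
      have hmap2 : conormalToConormal Q r x I' (I'.toCotangent ⟨∑ i, w i * x i, hxsum w⟩)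
          = (imageIdeal Q r x I').toCotangent
              ⟨Ideal.Quotient.mk (seqIdeal Q r x) (∑ i, w i * x i),
                Ideal.mem_map_of_mem _ (hxsum w)⟩ := rfl
      rw [hmap2, Ideal.toCotangent_eq_zero]
      show Ideal.Quotient.mk (seqIdeal Q r x) (∑ i, w i * x i) ∈ (imageIdeal Q r x I') ^ 2
      rw [Ideal.Quotient.eq_zero_iff_mem.mpr hmem]
      exact Submodule.zero_mem _
  have hsurj : Function.Surjective (conormalToConormal Q r x I') := by
    intro m
    obtain ⟨⟨abar, habar⟩, rfl⟩ := (imageIdeal Q r x I').toCotangent_surjective m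
    obtain ⟨a, haI, hmk⟩ :=
      (Ideal.mem_map_iff_of_surjective _ Ideal.Quotient.mk_surjective).mp habar
    refine ⟨I'.toCotangent ⟨a, haI⟩, ?_⟩
    have hmap : conormalToConormal Q r x I' (I'.toCotangent ⟨a, haI⟩)
        = (imageIdeal Q r x I').toCotangent
            ⟨Ideal.Quotient.mk (seqIdeal Q r x) a, Ideal.mem_map_of_mem _ haI⟩ := rfl
    rw [hmap]
    congr 1
    exact Subtype.ext hmk
  exact ⟨hinj, hexact, hsurj, ⟨g, hsplit⟩,
    ⟨(hexact.splitInjectiveEquiv hsurj ⟨g, hsplit⟩).1⟩⟩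
end
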